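/- Let λ₁ ≥ 0, λ₂ > 0 and define v*(x) = min(max(0, 1 − (x−λ₁)/λ₂), 1) for x ≥ 0. Then ρ(ℓ) = ∫₀^ℓ v*(x) dx equals: ℓ if ℓ ≤ λ₁; θℓ − ℓ²/(2λ₂) − (θ−1)²λ₂/2 if λ₁ < ℓ < λ₁+λ₂, where θ = (λ₁+λ₂)/λ₂; and (λ₂ + 2λ₁)/2 if ℓ ≥ λ₁+λ₂. -/

import Mathlib

/-! `v*` is `1` on `(-∞, λ₁]`, the affine ramp `1 - (x - λ₁)/λ₂` on `[λ₁, λ₁ + λ₂]` and `0`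
beyond, so `ρ(ℓ)` is computed by splitting `∫₀^ℓ` at `λ₁` and `λ₁ + λ₂` and integrating each
piece exactly. -/

open Set intervalIntegral

namespace Curriculum

variable {l1 l2 a b x : ℝ}

/-- The optimal weight `v*` of the curriculum `G(v) = (λ₂/2) v² - (λ₁ + λ₂) v`. -/
noncomputable def optimalWeight (l1 l2 x : ℝ) : ℝ := min (max 0 (1 - (x - l1) / l2)) 1

/-- An antiderivative of `optimalWeight` on `[λ₁, λ₁ + λ₂]`. -/
noncomputable def rampPrimitive (l1 l2 x : ℝ) : ℝ := x - (x - l1) ^ 2 / (2 * l2)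

theorem continuous_optimalWeight : Continuous (optimalWeight l1 l2) := by
  unfold optimalWeight
  fun_prop

theorem optimalWeight_of_le (h2 : 0 < l2) (hx : x ≤ l1) : optimalWeight l1 l2 x = 1 := by
  have : (x - l1) / l2 ≤ 0 := div_nonpos_of_nonpos_of_nonneg (by linarith) h2.le
  rw [optimalWeight, max_eq_right (by linarith), min_eq_right (by linarith)]

theorem optimalWeight_of_mem_Icc (h2 : 0 < l2) (hx : x ∈ Icc l1 (l1 + l2)) :
    optimalWeight l1 l2 x = 1 - (x - l1) / l2 := by
  have h0 : 0 ≤ (x - l1) / l2 := div_nonneg (by linarith [hx.1]) h2.le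
  have h1 : (x - l1) / l2 ≤ 1 := (div_le_one h2).2 (by linarith [hx.2])
  rw [optimalWeight, max_eq_right (by linarith), min_eq_left (by linarith)]

theorem optimalWeight_of_ge (h2 : 0 < l2) (hx : l1 + l2 ≤ x) : optimalWeight l1 l2 x = 0 := by
  have : 1 ≤ (x - l1) / l2 := (le_div_iff₀ h2).2 (by linarith)
  rw [optimalWeight, max_eq_left (by linarith), min_eq_left zero_le_one]

theorem hasDerivAt_rampPrimitive (h2 : 0 < l2) (x : ℝ) :
    HasDerivAt (rampPrimitive l1 l2) (1 - (x - l1) / l2) x := by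
  refine ((hasDerivAt_id' x).sub
    ((((hasDerivAt_id' x).sub_const l1).pow 2).div_const (2 * l2))).congr_deriv ?_
  field_simp
  ring

theorem integral_optimalWeight_of_le (h2 : 0 < l2) (ha : a ≤ l1) (hb : b ≤ l1) :
    ∫ x in a..b, optimalWeight l1 l2 x = b - a := by
  rw [integral_congr (g := fun _ => 1), integral_const, smul_eq_mul, mul_one]
  exact fun x hx => optimalWeight_of_le h2 (ordConnected_Iic.uIcc_subset ha hb hx)

theorem integral_optimalWeight_of_mem_Icc (h2 : 0 < l2) (ha : a ∈ Icc l1 (l1 + l2))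
    (hb : b ∈ Icc l1 (l1 + l2)) :
    ∫ x in a..b, optimalWeight l1 l2 x = rampPrimitive l1 l2 b - rampPrimitive l1 l2 a := by
  rw [integral_congr (g := fun x => 1 - (x - l1) / l2)]
  · exact integral_eq_sub_of_hasDerivAt (fun x _ => hasDerivAt_rampPrimitive h2 x)
      ((by fun_prop : Continuous fun x : ℝ => 1 - (x - l1) / l2).intervalIntegrable a b)
  · exact fun x hx => optimalWeight_of_mem_Icc h2 (uIcc_subset_Icc ha hb hx)

theorem integral_optimalWeight_of_ge (h2 : 0 < l2) (ha : l1 + l2 ≤ a) (hb : l1 + l2 ≤ b) :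
    ∫ x in a..b, optimalWeight l1 l2 x = 0 := by
  rw [integral_congr (g := fun _ => 0), integral_zero]
  exact fun x hx => optimalWeight_of_ge h2 (ordConnected_Ici.uIcc_subset ha hb hx)

theorem integral_optimalWeight_add_adjacent (a b c : ℝ) :
    (∫ x in a..b, optimalWeight l1 l2 x) + ∫ x in b..c, optimalWeight l1 l2 x =
      ∫ x in a..c, optimalWeight l1 l2 x :=
  integral_add_adjacent_intervals (continuous_optimalWeight.intervalIntegrable a b)
    (continuous_optimalWeight.intervalIntegrable b c)

end Curriculum

open Curriculum in
theorem stmt3_general (l1 l2 : ℝ) (h1 : 0 ≤ l1) (h2 : 0 < l2) (ℓ : ℝ) :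
    (ℓ ≤ l1 → ∫ x in (0:ℝ)..ℓ, min (max 0 (1 - (x - l1) / l2)) 1 = ℓ) ∧
    (l1 < ℓ → ℓ < l1 + l2 →
      ∫ x in (0:ℝ)..ℓ, min (max 0 (1 - (x - l1) / l2)) 1 =
        ((l1 + l2) / l2) * ℓ - ℓ ^ 2 / (2 * l2) - ((l1 + l2) / l2 - 1) ^ 2 * l2 / 2) ∧
    (l1 + l2 ≤ ℓ →
      ∫ x in (0:ℝ)..ℓ, min (max 0 (1 - (x - l1) / l2)) 1 = (l2 + 2 * l1) / 2) := by
  change (ℓ ≤ l1 → ∫ x in (0:ℝ)..ℓ, optimalWeight l1 l2 x = _) ∧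
    (l1 < ℓ → ℓ < l1 + l2 → ∫ x in (0:ℝ)..ℓ, optimalWeight l1 l2 x = _) ∧
    (l1 + l2 ≤ ℓ → ∫ x in (0:ℝ)..ℓ, optimalWeight l1 l2 x = _)
  have hl1 : l1 ∈ Icc l1 (l1 + l2) := ⟨le_rfl, by linarith⟩
  have hl12 : l1 + l2 ∈ Icc l1 (l1 + l2) := ⟨by linarith, le_rfl⟩
  refine ⟨fun hℓ => ?_, fun hℓ₁ hℓ₂ => ?_, fun hℓ => ?_⟩
  · rw [integral_optimalWeight_of_le h2 h1 hℓ, sub_zero]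
  · rw [← integral_optimalWeight_add_adjacent 0 l1 ℓ, integral_optimalWeight_of_le h2 h1 le_rfl,
      integral_optimalWeight_of_mem_Icc h2 hl1 ⟨hℓ₁.le, hℓ₂.le⟩, rampPrimitive, rampPrimitive]
    field_simp
    ring
  · rw [← integral_optimalWeight_add_adjacent 0 (l1 + l2) ℓ,
      ← integral_optimalWeight_add_adjacent 0 l1 (l1 + l2),
      integral_optimalWeight_of_le h2 h1 le_rfl, integral_optimalWeight_of_mem_Icc h2 hl1 hl12,
      integral_optimalWeight_of_ge h2 le_rfl hℓ, rampPrimitive, rampPrimitive]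
    field_simp
    ring

/-- Piecewise closed form of ρ(ℓ) = ∫₀^ℓ v*(x) dx for the predefined curriculum. -/
theorem stmt3 (l1 l2 : ℝ) (h1 : 0 ≤ l1) (h2 : 0 < l2) (ℓ : ℝ) (hℓ : 0 ≤ ℓ) :
    (ℓ ≤ l1 → ∫ x in (0:ℝ)..ℓ, min (max 0 (1 - (x - l1) / l2)) 1 = ℓ) ∧
    (l1 < ℓ → ℓ < l1 + l2 →
      ∫ x in (0:ℝ)..ℓ, min (max 0 (1 - (x - l1) / l2)) 1 =
        ((l1 + l2) / l2) * ℓ - ℓ ^ 2 / (2 * l2) - ((l1 + l2) / l2 - 1) ^ 2 * l2 / 2) ∧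
    (l1 + l2 ≤ ℓ →
      ∫ x in (0:ℝ)..ℓ, min (max 0 (1 - (x - l1) / l2)) 1 = (l2 + 2 * l1) / 2) :=
  stmt3_general l1 l2 h1 h2 ℓ
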